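/- arXiv:2406.00753 — 4 statements merged into one kernel-verified Lean document; each statement's English description precedes it below -/
import Mathlib

section
/- Let sat : ℝ → ℝ be defined by sat(r) = min{1, max{−1, r}}, and let c₀ be a constant with 0 < c₀ < 1/2. Then the planar system ẋ = −c₀·sat(z), ż = −sat(z−x) is globally asymptotically stable at the origin: (0,0) is an equilibrium and there exists β of class KL such that every solution satisfies |(x(t), z(t))| ≤ β(|(x(0), z(0))|, t) for all t ≥ 0. -/
open Set Filter MeasureTheory InnerProductSpace

noncomputable section

/-- Class `K` functions: continuous on `[0,∞)`, strictly increasing, zero at zero. -/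
def ClassK (α : ℝ → ℝ) : Prop :=
  ContinuousOn α (Ici 0) ∧ StrictMonoOn α (Ici 0) ∧ α 0 = 0

/-- Class `K∞` functions: class `K` and unbounded. -/
def ClassKInf (α : ℝ → ℝ) : Prop :=
  ClassK α ∧ ∀ M : ℝ, ∃ r ∈ Ici (0:ℝ), M < α r

/-- Class `P` functions: continuous, positive for positive arguments, nonnegative at zero. -/
def ClassP (α : ℝ → ℝ) : Prop :=
  ContinuousOn α (Ici 0) ∧ (∀ r > 0, 0 < α r) ∧ 0 ≤ α 0

/-- Class `PD` (positive definite) functions: continuous, positive for positive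
arguments, zero at zero. -/
def ClassPD (α : ℝ → ℝ) : Prop :=
  ContinuousOn α (Ici 0) ∧ (∀ r > 0, 0 < α r) ∧ α 0 = 0

/-- Class `KL` functions. -/
def ClassKL (β : ℝ → ℝ → ℝ) : Prop :=
  ContinuousOn (Function.uncurry β) (Ici 0 ×ˢ Ici 0) ∧
  (∀ t ≥ 0, ClassK (fun s => β s t)) ∧
  (∀ s > 0, AntitoneOn (fun t => β s t) (Ici 0) ∧
    Tendsto (fun t => β s t) atTop (nhds 0))

/-- The saturation function `sat(r) = min{1, max{−1, r}}`. -/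
def sat (r : ℝ) : ℝ := min 1 (max (-1) r)

/-! With `S` the primitive of `sat`, the function `V(x, z) = S(z - x) + S(x)` satisfies
`V̇ ≤ -c₀(1 - 2c₀) min(V, 1)` along solutions: the cross term `c₀ sat z (sat x - sat (z - x))`
is absorbed by `sat (z - x)²`, because `|sat z - sat x| ≤ |z - x|` while `z - x` is unsaturated
and every term is bounded by `1` once it is saturated. Hence `V e^V` decays like
`e^{-c₀(1 - 2c₀) t}`, and since `V` is comparable to the norm (`V ≤ 3‖·‖` and
`min(‖·‖², ‖·‖) ≤ 4V`) this gives a `KL` bound of the form `α(γ(s) e^{-c₀(1 - 2c₀) t})`. -/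

open Real

lemma sat_zero : sat 0 = 0 := by norm_num [sat]

lemma abs_sat_le_one (r : ℝ) : |sat r| ≤ 1 :=
  abs_le.2 ⟨le_min (by norm_num) (le_max_left _ _), min_le_left _ _⟩

lemma sat_of_abs_le_one {r : ℝ} (h : |r| ≤ 1) : sat r = r := by
  rw [sat, max_eq_right (abs_le.1 h).1, min_eq_right (abs_le.1 h).2]

lemma abs_sat_of_one_le_abs {r : ℝ} (h : 1 ≤ |r|) : |sat r| = 1 := by
  rcases le_abs'.1 h with h | h
  · rw [sat, max_eq_left (by linarith), min_eq_right (by norm_num)]; norm_num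
  · rw [sat, max_eq_right (by linarith), min_eq_left h]; norm_num

lemma lipschitzWith_sat : LipschitzWith 1 sat :=
  (LipschitzWith.id.const_max (-1)).const_min 1

lemma abs_sat_sub_sat_le (a b : ℝ) : |sat a - sat b| ≤ |a - b| := by
  simpa [Real.dist_eq] using lipschitzWith_sat.dist_le_mul a b

lemma hasDerivAt_mul_abs (u : ℝ) : HasDerivAt (fun v => v * |v|) (2 * |u|) u := by
  rcases eq_or_ne u 0 with rfl | hu
  · rw [hasDerivAt_iff_isLittleO_nhds_zero]
    refine Asymptotics.IsBigO.trans_isLittleO ?_ (Asymptotics.isLittleO_pow_id one_lt_two)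
    exact Asymptotics.isBigO_of_le _ fun h => by simp [sq]
  · refine ((hasDerivAt_id' u).mul (hasDerivAt_abs hu)).congr_deriv ?_
    rw [self_mul_sign]; ring

/-- The primitive of `sat` vanishing at `0`: it equals `r ^ 2 / 2` on `[-1, 1]` and `|r| - 1 / 2`
outside. -/
def satPrimitive (r : ℝ) : ℝ := ((r + 1) * |r + 1| - (r - 1) * |r - 1| - 2) / 4

lemma hasDerivAt_satPrimitive (r : ℝ) : HasDerivAt satPrimitive (sat r) r := by
  have h₁ := (hasDerivAt_mul_abs (r + 1)).comp r ((hasDerivAt_id' r).add_const 1)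
  have h₂ := (hasDerivAt_mul_abs (r - 1)).comp r ((hasDerivAt_id' r).sub_const 1)
  refine (((h₁.sub h₂).sub_const 2).div_const 4).congr_deriv ?_
  rcases le_total r (-1) with h | h
  · rw [sat, max_eq_left h, min_eq_right (by norm_num), abs_of_nonpos (by linarith),
      abs_of_nonpos (by linarith)]
    ring
  rcases le_total r 1 with h' | h'
  · rw [sat_of_abs_le_one (abs_le.2 ⟨h, h'⟩), abs_of_nonneg (by linarith),
      abs_of_nonpos (by linarith)]
    ring
  · rw [sat, max_eq_right (by linarith), min_eq_left h', abs_of_nonneg (by linarith),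
      abs_of_nonneg (by linarith)]
    ring

lemma satPrimitive_of_abs_le_one {r : ℝ} (h : |r| ≤ 1) : satPrimitive r = r ^ 2 / 2 := by
  rw [satPrimitive, abs_of_nonneg (by linarith [(abs_le.1 h).1]),
    abs_of_nonpos (by linarith [(abs_le.1 h).2])]
  ring

lemma satPrimitive_of_one_le_abs {r : ℝ} (h : 1 ≤ |r|) : satPrimitive r = |r| - 1 / 2 := by
  rcases le_abs'.1 h with h | h
  · rw [satPrimitive, abs_of_nonpos (by linarith), abs_of_nonpos (by linarith),
      abs_of_nonpos (by linarith)]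
    ring
  · rw [satPrimitive, abs_of_nonneg (by linarith), abs_of_nonneg (by linarith),
      abs_of_nonneg (by linarith)]
    ring

lemma satPrimitive_nonneg (r : ℝ) : 0 ≤ satPrimitive r := by
  rcases le_total |r| 1 with h | h
  · rw [satPrimitive_of_abs_le_one h]; positivity
  · rw [satPrimitive_of_one_le_abs h]; linarith

lemma satPrimitive_le_abs (r : ℝ) : satPrimitive r ≤ |r| := by
  rcases le_total |r| 1 with h | h
  · rw [satPrimitive_of_abs_le_one h, ← sq_abs]
    nlinarith [abs_nonneg r]
  · rw [satPrimitive_of_one_le_abs h]; linarith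

lemma min_sq_abs_le_two_mul_satPrimitive (r : ℝ) : min (|r| ^ 2) |r| ≤ 2 * satPrimitive r := by
  rcases le_total |r| 1 with h | h
  · rw [satPrimitive_of_abs_le_one h, sq_abs]; linarith [min_le_left (r ^ 2) |r|]
  · rw [satPrimitive_of_one_le_abs h]; linarith [min_le_right (|r| ^ 2) |r|]

lemma min_satPrimitive_one_le_sat_sq (r : ℝ) : min (satPrimitive r) 1 ≤ sat r ^ 2 := by
  rcases le_total |r| 1 with h | h
  · rw [satPrimitive_of_abs_le_one h, sat_of_abs_le_one h]
    linarith [min_le_left (r ^ 2 / 2) 1, sq_nonneg r]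
  · rw [← sq_abs, abs_sat_of_one_le_abs h]; simp

-- After bounding the cross terms, what remains is `½(|a| - 2c|A|)² + ½((1 - 2c)|a|)²`.
lemma dissipation_of_abs_sub_le {c a A B : ℝ} (hc : 0 ≤ c) (hAB : |B - A| ≤ |a|) :
    c * (1 - 2 * c) * (a ^ 2 + A ^ 2) ≤ a ^ 2 + c * B * (A - a) := by
  have h₁ : A * a ≤ |A| * |a| := abs_mul A a ▸ le_abs_self _
  have h₂ : -(|a| * (|A| + |a|)) ≤ (B - A) * (A - a) := by
    have := mul_le_mul hAB (abs_sub A a) (abs_nonneg _) (abs_nonneg _)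
    linarith [abs_mul (B - A) (A - a), neg_abs_le ((B - A) * (A - a))]
  rw [show a ^ 2 + c * B * (A - a) = a ^ 2 + c * A ^ 2 - c * (A * a) + c * ((B - A) * (A - a))
    by ring, ← sq_abs a, ← sq_abs A]
  nlinarith [mul_le_mul_of_nonneg_left h₁ hc, mul_le_mul_of_nonneg_left h₂ hc,
    sq_nonneg (|a| - 2 * c * |A|), sq_nonneg ((1 - 2 * c) * |a|)]

lemma dissipation_of_abs_eq_one {c a A B : ℝ} (hc : 0 ≤ c) (hc' : c ≤ 1 / 2) (ha : |a| = 1)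
    (hA : |A| ≤ 1) (hB : |B| ≤ 1) :
    c * (1 - 2 * c) * (a ^ 2 + A ^ 2) ≤ a ^ 2 + c * B * (A - a) := by
  have ha2 : a ^ 2 = 1 := by rw [← sq_abs, ha]; norm_num
  have hA2 : A ^ 2 ≤ 1 := by rw [← sq_abs]; nlinarith [abs_nonneg A]
  have hBA : -2 ≤ B * (A - a) := by
    have := mul_le_mul hB ((abs_sub A a).trans (by linarith : |A| + |a| ≤ 2)) (abs_nonneg _)
      zero_le_one
    linarith [abs_mul B (A - a), neg_abs_le (B * (A - a))]
  nlinarith [mul_le_mul_of_nonneg_left hBA hc, mul_le_mul_of_nonneg_left hA2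
    (mul_nonneg hc (by linarith : 0 ≤ 1 - 2 * c)), sq_nonneg (1 - 2 * c)]

lemma sat_dissipation {c : ℝ} (hc : 0 ≤ c) (hc' : c ≤ 1 / 2) (x z : ℝ) :
    c * (1 - 2 * c) * (sat (z - x) ^ 2 + sat x ^ 2) ≤
      sat (z - x) ^ 2 + c * sat z * (sat x - sat (z - x)) := by
  rcases le_total |z - x| 1 with h | h
  · refine dissipation_of_abs_sub_le hc ?_
    rw [sat_of_abs_le_one h]
    exact abs_sat_sub_sat_le z x
  · exact dissipation_of_abs_eq_one hc hc' (abs_sat_of_one_le_abs h) (abs_sat_le_one x)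
      (abs_sat_le_one z)

def lyapunov (x z : ℝ) : ℝ := satPrimitive (z - x) + satPrimitive x

lemma lyapunov_nonneg (x z : ℝ) : 0 ≤ lyapunov x z :=
  add_nonneg (satPrimitive_nonneg _) (satPrimitive_nonneg _)

lemma HasDerivAt.lyapunov {x z : ℝ → ℝ} {x' z' t : ℝ} (hx : HasDerivAt x x' t)
    (hz : HasDerivAt z z' t) :
    HasDerivAt (fun τ => lyapunov (x τ) (z τ)) (sat (z t - x t) * (z' - x') + sat (x t) * x') t :=
  ((hasDerivAt_satPrimitive _).comp t (hz.sub hx)).add ((hasDerivAt_satPrimitive _).comp t hx)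

lemma min_add_le_min_add_min {p q c : ℝ} (hp : 0 ≤ p) (hq : 0 ≤ q) (hc : 0 ≤ c) :
    min (p + q) c ≤ min p c + min q c := by
  rcases min_cases p c with ⟨h, -⟩ | ⟨h, -⟩ <;> rcases min_cases q c with ⟨h', -⟩ | ⟨h', -⟩ <;>
    linarith [min_le_left (p + q) c, min_le_right (p + q) c]

lemma lyapunov_dissipation {c : ℝ} (hc : 0 ≤ c) (hc' : c ≤ 1 / 2) (x z : ℝ) :
    sat (z - x) * (-sat (z - x) - -c * sat z) + sat x * (-c * sat z) ≤
      -(c * (1 - 2 * c)) * min (lyapunov x z) 1 := by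
  have hmin : min (lyapunov x z) 1 ≤ sat (z - x) ^ 2 + sat x ^ 2 :=
    (min_add_le_min_add_min (satPrimitive_nonneg _) (satPrimitive_nonneg _) zero_le_one).trans
      (add_le_add (min_satPrimitive_one_le_sat_sq _) (min_satPrimitive_one_le_sat_sq _))
  have hε : 0 ≤ c * (1 - 2 * c) := mul_nonneg hc (by linarith)
  linarith [sat_dissipation hc hc' x z, mul_le_mul_of_nonneg_left hmin hε]

lemma lyapunov_le_three_mul_norm (x z : ℝ) : lyapunov x z ≤ 3 * ‖(x, z)‖ := by
  have hx : |x| ≤ ‖(x, z)‖ := norm_fst_le (x, z)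
  have hz : |z| ≤ ‖(x, z)‖ := norm_snd_le (x, z)
  unfold lyapunov
  linarith [satPrimitive_le_abs (z - x), satPrimitive_le_abs x, abs_sub z x]

lemma min_sq_add_le {p q : ℝ} (hp : 0 ≤ p) (hq : 0 ≤ q) :
    min ((p + q) ^ 2) (p + q) ≤ 2 * (min (p ^ 2) p + min (q ^ 2) q) := by
  rcases min_cases (p ^ 2) p with ⟨h, h₁⟩ | ⟨h, h₁⟩ <;>
    rcases min_cases (q ^ 2) q with ⟨h', h₂⟩ | ⟨h', h₂⟩ <;>
    rw [h, h'] <;>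
    nlinarith [min_le_left ((p + q) ^ 2) (p + q), min_le_right ((p + q) ^ 2) (p + q),
      sq_nonneg (p - q)]

lemma min_sq_norm_le_four_mul_lyapunov (x z : ℝ) :
    min (‖(x, z)‖ ^ 2) ‖(x, z)‖ ≤ 4 * lyapunov x z := by
  have hn : ‖(x, z)‖ ≤ |z - x| + |x| := by
    refine norm_prod_le_iff.2 ⟨?_, ?_⟩
    · simp only [Real.norm_eq_abs]; linarith [abs_nonneg (z - x)]
    · simpa using abs_add_le (z - x) x
  calc min (‖(x, z)‖ ^ 2) ‖(x, z)‖ ≤ min ((|z - x| + |x|) ^ 2) (|z - x| + |x|) :=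
        min_le_min (pow_le_pow_left₀ (norm_nonneg _) hn 2) hn
    _ ≤ 2 * (min (|z - x| ^ 2) |z - x| + min (|x| ^ 2) |x|) :=
        min_sq_add_le (abs_nonneg _) (abs_nonneg _)
    _ ≤ 4 * lyapunov x z := by
        unfold lyapunov
        linarith [min_sq_abs_le_two_mul_satPrimitive (z - x),
          min_sq_abs_le_two_mul_satPrimitive x]

lemma le_max_sqrt_of_min_sq_le {n v : ℝ} (hn : 0 ≤ n) (h : min (n ^ 2) n ≤ v) :
    n ≤ max (√v) v := by
  rcases le_total n 1 with h₁ | h₁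
  · rw [min_eq_left (by nlinarith)] at h
    exact le_max_of_le_left ((le_abs_self n).trans (Real.abs_le_sqrt h))
  · rw [min_eq_right (by nlinarith)] at h
    exact le_max_of_le_right h

lemma le_mul_exp_neg_of_deriv_le_neg_mul_min {W W' : ℝ → ℝ} {ε : ℝ} (hε : 0 ≤ ε)
    (hW : ∀ t ≥ 0, HasDerivAt W (W' t) t) (hW₀ : ∀ t ≥ 0, 0 ≤ W t)
    (hW' : ∀ t ≥ 0, W' t ≤ -ε * min (W t) 1) {t : ℝ} (ht : 0 ≤ t) :
    W t ≤ W 0 * exp (W 0) * exp (-(ε * t)) := by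
  -- `v * exp v` turns `W' ≤ -ε min(W, 1)` into `ε`-exponential decay, as `v ≤ (1 + v) min(v, 1)`.
  set y := fun τ => W τ * exp (W τ) * exp (ε * τ)
  set y' := fun τ => exp (ε * τ) * exp (W τ) * ((1 + W τ) * W' τ + ε * W τ)
  have hy : ∀ τ ≥ 0, HasDerivAt y (y' τ) τ := by
    intro τ hτ
    refine (((hW τ hτ).mul (hW τ hτ).exp).mul
      ((hasDerivAt_id' τ).const_mul ε).exp).congr_deriv ?_
    simp only [Pi.mul_apply]
    ring
  have hy' : ∀ τ ≥ 0, y' τ ≤ 0 := by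
    intro τ hτ
    have hmin : W τ ≤ (1 + W τ) * min (W τ) 1 := by
      rcases min_cases (W τ) 1 with ⟨h, -⟩ | ⟨h, -⟩ <;> rw [h] <;> nlinarith [hW₀ τ hτ]
    have hW'τ := mul_le_mul_of_nonneg_left (hW' τ hτ) (by linarith [hW₀ τ hτ] : 0 ≤ 1 + W τ)
    refine mul_nonpos_of_nonneg_of_nonpos (by positivity) ?_
    nlinarith [mul_le_mul_of_nonneg_left hmin hε]
  have hanti : AntitoneOn y (Ici 0) := by
    refine antitoneOn_of_hasDerivWithinAt_nonpos (f' := y') (convex_Ici 0)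
      (fun τ hτ => (hy τ hτ).continuousAt.continuousWithinAt) (fun τ hτ => ?_) (fun τ hτ => ?_)
    · rw [interior_Ici] at hτ
      exact (hy τ (le_of_lt hτ)).hasDerivWithinAt
    · rw [interior_Ici] at hτ
      exact hy' τ (le_of_lt hτ)
  calc W t ≤ W t * exp (W t) := le_mul_of_one_le_right (hW₀ t ht) (one_le_exp (hW₀ t ht))
    _ = y t * exp (-(ε * t)) := by simp only [y, mul_assoc, ← exp_add]; simp
    _ ≤ y 0 * exp (-(ε * t)) := by gcongr; exact hanti self_mem_Ici ht ht
    _ = W 0 * exp (W 0) * exp (-(ε * t)) := by simp [y]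

lemma ClassK.monotoneOn {α : ℝ → ℝ} (hα : ClassK α) : MonotoneOn α (Ici 0) :=
  hα.2.1.monotoneOn

lemma ClassK.nonneg {α : ℝ → ℝ} (hα : ClassK α) {s : ℝ} (hs : 0 ≤ s) : 0 ≤ α s :=
  hα.2.2 ▸ hα.monotoneOn self_mem_Ici hs hs

lemma ClassK.classKL_comp_mul_exp {α γ : ℝ → ℝ} (hα : ClassK α) (hγ : ClassK γ) {ε : ℝ}
    (hε : 0 < ε) : ClassKL (fun s t => α (γ s * exp (-(ε * t)))) := by
  have hmaps : ∀ s ≥ 0, ∀ t, γ s * exp (-(ε * t)) ∈ Ici 0 :=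
    fun s hs t => mul_nonneg (hγ.nonneg hs) (exp_pos _).le
  refine ⟨?_, fun t _ => ⟨?_, ?_, ?_⟩, fun s hs => ⟨?_, ?_⟩⟩
  · refine hα.1.comp ((hγ.1.comp continuousOn_fst fun p hp => hp.1).mul
      (by fun_prop : Continuous fun p : ℝ × ℝ => exp (-(ε * p.2))).continuousOn)
      fun p hp => hmaps _ hp.1 _
  · exact hα.1.comp (hγ.1.mul continuousOn_const) fun s hs => hmaps s hs t
  · exact hα.2.1.comp
      (fun s hs s' hs' h => mul_lt_mul_of_pos_right (hγ.2.1 hs hs' h) (exp_pos _))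
      fun s hs => hmaps s hs t
  · simp [hγ.2.2, hα.2.2]
  · intro t _ t' _ h
    refine hα.monotoneOn (hmaps s hs.le t') (hmaps s hs.le t) ?_
    exact mul_le_mul_of_nonneg_left (exp_le_exp.2 (by nlinarith)) (hγ.nonneg hs.le)
  · have hdecay : Tendsto (fun t => γ s * exp (-(ε * t))) atTop (nhdsWithin 0 (Ici 0)) := by
      refine tendsto_nhdsWithin_iff.2 ⟨?_, Eventually.of_forall (hmaps s hs.le)⟩
      simpa using (tendsto_exp_atBot.comp (tendsto_neg_atTop_atBot.comp
        (tendsto_id.const_mul_atTop hε))).const_mul (γ s)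
    simpa [Function.comp_def, hα.2.2] using (hα.1 0 self_mem_Ici).tendsto.comp hdecay

lemma classK_max_sqrt_self : ClassK (fun v => max (√v) v) :=
  ⟨(Real.continuous_sqrt.max continuous_id).continuousOn,
    fun _ hu _ _ huv => max_lt_max (Real.sqrt_lt_sqrt hu huv) huv, by simp⟩

lemma classK_mul_mul_exp {a b : ℝ} (ha : 0 < a) (hb : 0 ≤ b) :
    ClassK (fun s => a * s * exp (b * s)) :=
  ⟨by fun_prop,
    fun s hs _ _ h => mul_lt_mul (mul_lt_mul_of_pos_left h ha)
      (exp_le_exp.2 (mul_le_mul_of_nonneg_left h.le hb)) (exp_pos _)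
      (mul_nonneg ha.le (hs.trans h.le)), by simp⟩

/-- **Example 1**: the planar system with saturated dynamics
`ẋ = −c₀·sat(z)`, `ż = −sat(z−x)` is globally asymptotically stable at the origin
whenever `0 < c₀ < 1/2`. -/
theorem stmt_12 (c₀ : ℝ) (hc₀ : 0 < c₀) (hc₀' : c₀ < 1 / 2) :
    (-c₀ * sat 0 = 0 ∧ -sat (0 - 0) = 0) ∧
    ∃ β : ℝ → ℝ → ℝ, ClassKL β ∧
      ∀ x z : ℝ → ℝ,
        (∀ t ≥ 0, HasDerivAt x (-c₀ * sat (z t)) t) →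
        (∀ t ≥ 0, HasDerivAt z (-sat (z t - x t)) t) →
        ∀ t ≥ 0, ‖(x t, z t)‖ ≤ β ‖(x 0, z 0)‖ t := by
  have hε : 0 < c₀ * (1 - 2 * c₀) := mul_pos hc₀ (by linarith)
  refine ⟨by simp [sat_zero], _, classK_max_sqrt_self.classKL_comp_mul_exp
    (classK_mul_mul_exp (a := 12) (b := 3) (by norm_num) (by norm_num)) hε, ?_⟩
  intro x z hx hz t ht
  set s := ‖(x 0, z 0)‖
  have hdecay := le_mul_exp_neg_of_deriv_le_neg_mul_min hε.le
    (fun τ hτ => (hx τ hτ).lyapunov (hz τ hτ)) (fun τ _ => lyapunov_nonneg _ _)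
    (fun τ _ => lyapunov_dissipation hc₀.le hc₀'.le _ _) ht
  have hinit : lyapunov (x 0) (z 0) * exp (lyapunov (x 0) (z 0)) ≤ 3 * s * exp (3 * s) :=
    mul_le_mul (lyapunov_le_three_mul_norm _ _)
      (exp_le_exp.2 (lyapunov_le_three_mul_norm _ _)) (exp_pos _).le (by positivity)
  refine le_max_sqrt_of_min_sq_le (norm_nonneg _) ?_
  calc min (‖(x t, z t)‖ ^ 2) ‖(x t, z t)‖ ≤ 4 * lyapunov (x t) (z t) :=
        min_sq_norm_le_four_mul_lyapunov _ _
    _ ≤ 4 * (3 * s * exp (3 * s) * exp (-(c₀ * (1 - 2 * c₀) * t))) := by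
        gcongr
        exact hdecay.trans (mul_le_mul_of_nonneg_right hinit (exp_pos _).le)
    _ = 12 * s * exp (3 * s) * exp (-(c₀ * (1 - 2 * c₀) * t)) := by ring
end
end

section
/- Let M be a real p×q matrix with full column rank (rank M = q) and let μ > 0. Then the (p+q)×(p+q) real block matrix A = [[−I_p, −M], [μMᵀ, 0]] is Hurwitz: every eigenvalue λ ∈ ℂ of A satisfies Re λ < 0. -/
open Set Filter MeasureTheory InnerProductSpace

noncomputable section

/-!
Let `(x, y)` be a complex eigenvector for `λ`. Pairing the two block rows with `x̄` and `ȳ`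
gives `x̄ᵀ M y = -(1 + λ)‖x‖²` and `μ · conj (x̄ᵀ M y) = λ‖y‖²`, whose real parts combine to
`-μ (1 + Re λ)‖x‖² = Re λ ‖y‖²`. Full column rank forces `x ≠ 0` (otherwise `M y = 0`, so
`y = 0`); then the left side is negative when `Re λ ≥ 0`, while the right side is not.
-/

section
open Matrix Complex ComplexOrder

theorem Matrix.mulVec_injective_of_rank_eq_card {K m n : Type*} [Field K] [Fintype n]
    {M : Matrix m n K} (hM : M.rank = Fintype.card n) : Function.Injective M.mulVec := by
  have h := LinearMap.finrank_range_add_finrank_ker M.mulVecLin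
  rw [Module.finrank_fintype_fun_eq_card, ← Matrix.rank, hM] at h
  have hker : Module.finrank K (LinearMap.ker M.mulVecLin) = 0 := by omega
  exact LinearMap.ker_eq_bot.mp (Submodule.finrank_eq_zero.mp hker)

theorem Matrix.mulVec_map_ofReal_injective {m n : Type*} [Fintype n] {M : Matrix m n ℝ}
    (hM : Function.Injective M.mulVec) : Function.Injective (M.map ((↑) : ℝ → ℂ)).mulVec := by
  have hre : ∀ z i, ((M.map ((↑) : ℝ → ℂ) *ᵥ z) i).re = (M *ᵥ fun j ↦ (z j).re) i := by
    simp [mulVec, dotProduct]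
  have him : ∀ z i, ((M.map ((↑) : ℝ → ℂ) *ᵥ z) i).im = (M *ᵥ fun j ↦ (z j).im) i := by
    simp [mulVec, dotProduct]
  intro z w h
  funext j
  apply Complex.ext
  · exact congrFun (hM (funext fun i ↦ by rw [← hre, ← hre, h]) :
      (fun j ↦ (z j).re) = fun j ↦ (w j).re) j
  · exact congrFun (hM (funext fun i ↦ by rw [← him, ← him, h]) :
      (fun j ↦ (z j).im) = fun j ↦ (w j).im) j

def saddleMatrix {m n : Type*} [DecidableEq m] (M : Matrix m n ℂ) (μ : ℝ) :
    Matrix (m ⊕ n) (m ⊕ n) ℂ :=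
  fromBlocks (-1) (-M) ((μ : ℂ) • Mᴴ) 0

theorem Matrix.map_ofReal_fromBlocks_eq_saddleMatrix {m n : Type*} [DecidableEq m]
    (M : Matrix m n ℝ) (μ : ℝ) :
    (fromBlocks (-1) (-M) (μ • Mᵀ) 0).map ((↑) : ℝ → ℂ) = saddleMatrix (M.map (↑)) μ := by
  ext (i | i) (j | j) <;> simp [saddleMatrix, one_apply, apply_ite]

theorem Matrix.star_dotProduct_conjTranspose_mulVec {α m n : Type*} [CommSemiring α]
    [StarRing α] [Fintype m] [Fintype n] (M : Matrix m n α) (x : m → α) (y : n → α) :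
    star y ⬝ᵥ (Mᴴ *ᵥ x) = star (star x ⬝ᵥ (M *ᵥ y)) := by
  rw [star_dotProduct, star_mulVec, conjTranspose_conjTranspose, dotProduct_mulVec]

theorem re_lt_zero_of_saddleMatrix_mulVec_eq_smul {m n : Type*} [Fintype m] [Fintype n]
    [DecidableEq m] {M : Matrix m n ℂ} (hM : Function.Injective M.mulVec) {μ : ℝ} (hμ : 0 < μ)
    {lam : ℂ} {v : m ⊕ n → ℂ} (hv0 : v ≠ 0) (hv : saddleMatrix M μ *ᵥ v = lam • v) :
    lam.re < 0 := by
  obtain ⟨x, y, rfl⟩ : ∃ x y, v = Sum.elim x y := ⟨_, _, (Sum.elim_comp_inl_inr v).symm⟩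
  have hx : -x - M *ᵥ y = lam • x := by
    funext i
    simpa [saddleMatrix, fromBlocks_mulVec, neg_mulVec, sub_eq_add_neg] using congrFun hv (.inl i)
  have hy : (μ : ℂ) • (Mᴴ *ᵥ x) = lam • y := by
    funext j
    simpa [saddleMatrix, fromBlocks_mulVec, smul_mulVec] using congrFun hv (.inr j)
  have hx0 : x ≠ 0 := by
    rintro rfl
    have hy0 : y = 0 := hM (by simpa using hx)
    exact hv0 (by simp [hy0])
  set c := star x ⬝ᵥ (M *ᵥ y)
  have hxx : -(star x ⬝ᵥ x) - c = lam * (star x ⬝ᵥ x) := by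
    simpa [dotProduct_sub, dotProduct_neg] using congrArg (star x ⬝ᵥ ·) hx
  have hyy : μ * star c = lam * (star y ⬝ᵥ y) := by
    rw [← star_dotProduct_conjTranspose_mulVec]
    simpa using congrArg (star y ⬝ᵥ ·) hy
  have ha : 0 < star x ⬝ᵥ x := dotProduct_star_self_pos_iff.mpr hx0
  have hb : 0 ≤ star y ⬝ᵥ y := dotProduct_star_self_nonneg y
  rw [Complex.lt_def, zero_re, zero_im] at ha
  rw [Complex.le_def, zero_re, zero_im] at hb
  have hc : c = -(1 + lam) * (star x ⬝ᵥ x) := by linear_combination -hxx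
  have hre : μ * (-(1 + lam.re) * (star x ⬝ᵥ x).re) = lam.re * (star y ⬝ᵥ y).re := by
    simpa [hc, ← ha.2, ← hb.2] using congrArg Complex.re hyy
  by_contra! hlam
  nlinarith [mul_pos hμ ha.1, mul_nonneg hlam hb.1, mul_nonneg (mul_nonneg hμ.le hlam) ha.1.le]

end

/-- If `M` is a real `p×q` matrix with full column rank and `μ > 0`, then the block
matrix `A = [[−I_p, −M], [μMᵀ, 0]]` is Hurwitz: every complex eigenvalue of `A` has
negative real part. -/
theorem stmt_14 {p q : ℕ} (M : Matrix (Fin p) (Fin q) ℝ) (hM : M.rank = q)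
    (μ : ℝ) (hμ : 0 < μ) :
    ∀ lam : ℂ, ((Matrix.fromBlocks (-1 : Matrix (Fin p) (Fin p) ℝ) (-M) (μ • M.transpose)
          (0 : Matrix (Fin q) (Fin q) ℝ)).map (fun r : ℝ => (r : ℂ))
        - lam • (1 : Matrix (Fin p ⊕ Fin q) (Fin p ⊕ Fin q) ℂ)).det = 0 → lam.re < 0 := by
  intro lam hdet
  obtain ⟨v, hv0, hv⟩ := Matrix.exists_mulVec_eq_zero_iff.mpr hdet
  rw [Matrix.map_ofReal_fromBlocks_eq_saddleMatrix, Matrix.sub_mulVec, Matrix.smul_mulVec,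
    Matrix.one_mulVec, sub_eq_zero] at hv
  have hinj : Function.Injective (M.map ((↑) : ℝ → ℂ)).mulVec :=
    Matrix.mulVec_map_ofReal_injective
      (Matrix.mulVec_injective_of_rank_eq_card (hM.trans (Fintype.card_fin q).symm))
  exact re_lt_zero_of_saddleMatrix_mulVec_eq_smul hinj hμ hv0 hv
end
end

section
/- Let h : ℝⁿ → ℝ be continuously differentiable with ∇h(0) = 0, and suppose there exist constants ω > 0 and ϑ > 0 such that (p₁−p₂)ᵀ(∇h(p₁)−∇h(p₂)) ≥ ω|p₁−p₂|² and |∇h(p₁)−∇h(p₂)| ≤ ϑ|p₁−p₂| for all p₁, p₂ ∈ ℝⁿ. Let σ : ℝⁿ → ℝⁿ be the unit saturation σ(v) = v·min{1, 1/|v|} for v ≠ 0 and σ(0) = 0, and fix θ ∈ (0,1). Then for all p ∈ ℝⁿ and all Δ ∈ ℝⁿ with |Δ| ≤ (1−θ)ω|p|, it holds that pᵀσ(∇h(p)+Δ) ≥ min{ θω|p|², θω|p|/(ϑ+(1−θ)ω) }. -/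
/-
Strong monotonicity of `∇h` against `∇h 0 = 0` gives `ω‖p‖² ≤ ⟪p, ∇h p⟫`, and the perturbation
`Δ` can eat at most `(1 - θ)ω‖p‖²` of this, so `v = ∇h p + Δ` satisfies `θω‖p‖² ≤ ⟪p, v⟫`.
The Lipschitz bound gives `‖v‖ ≤ (ϑ + (1 - θ)ω)‖p‖`. Saturation multiplies `⟪p, v⟫` by
`min 1 ‖v‖⁻¹`, which is either `1` or at least the reciprocal of that norm bound.
-/

open Set Filter MeasureTheory InnerProductSpace

noncomputable section

theorem min_le_inner_min_one_inv_norm_smul {E : Type*} [NormedAddCommGroup E]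
    [InnerProductSpace ℝ E] {p v : E} {a r : ℝ} (hpv : a ≤ ⟪p, v⟫_ℝ) (hv : ‖v‖ ≤ r) :
    min a (a / r) ≤ ⟪p, min 1 ‖v‖⁻¹ • v⟫_ℝ := by
  have hc : 0 ≤ min 1 ‖v‖⁻¹ := by positivity
  rw [real_inner_smul_right]
  suffices min a (a / r) ≤ min 1 ‖v‖⁻¹ * a from this.trans (mul_le_mul_of_nonneg_left hpv hc)
  rcases le_or_gt a 0 with ha | ha
  · calc min a (a / r) ≤ a := min_le_left _ _
      _ ≤ min 1 ‖v‖⁻¹ * a := by nlinarith [min_le_left 1 ‖v‖⁻¹]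
  · have hv0 : 0 < ‖v‖ := norm_pos_iff.2 <| by
      rintro rfl
      simp only [inner_zero_right] at hpv
      linarith
    rw [mul_comm, mul_min_of_nonneg _ _ ha.le, mul_one, ← div_eq_mul_inv]
    exact min_le_min_left _ (div_le_div_of_nonneg_left ha.le hv0 hv)

theorem stmt_15_general
    {n : ℕ}
    (h : EuclideanSpace ℝ (Fin n) → ℝ)
    (hgrad0 : gradient h 0 = 0)
    (ω ϑ : ℝ)
    (hconv : ∀ p₁ p₂ : EuclideanSpace ℝ (Fin n),
      ω * ‖p₁ - p₂‖ ^ 2 ≤ ⟪p₁ - p₂, gradient h p₁ - gradient h p₂⟫_ℝ)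
    (hlip : ∀ p₁ p₂ : EuclideanSpace ℝ (Fin n),
      ‖gradient h p₁ - gradient h p₂‖ ≤ ϑ * ‖p₁ - p₂‖)
    (σ : EuclideanSpace ℝ (Fin n) → EuclideanSpace ℝ (Fin n))
    (hσ : ∀ v, σ v = min 1 ‖v‖⁻¹ • v)
    (θ : ℝ) :
    ∀ (p Δ : EuclideanSpace ℝ (Fin n)), ‖Δ‖ ≤ (1 - θ) * ω * ‖p‖ →
      min (θ * ω * ‖p‖ ^ 2) (θ * ω * ‖p‖ / (ϑ + (1 - θ) * ω))
        ≤ ⟪p, σ (gradient h p + Δ)⟫_ℝ := by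
  intro p Δ hΔ
  have hcoercive : ω * ‖p‖ ^ 2 ≤ ⟪p, gradient h p⟫_ℝ := by simpa [hgrad0] using hconv p 0
  have hgrowth : ‖gradient h p‖ ≤ ϑ * ‖p‖ := by simpa [hgrad0] using hlip p 0
  have hinner : θ * ω * ‖p‖ ^ 2 ≤ ⟪p, gradient h p + Δ⟫_ℝ := by
    rw [inner_add_right]
    nlinarith [neg_abs_le ⟪p, Δ⟫_ℝ, abs_real_inner_le_norm p Δ,
      mul_le_mul_of_nonneg_left hΔ (norm_nonneg p)]
  have hnorm : ‖gradient h p + Δ‖ ≤ (ϑ + (1 - θ) * ω) * ‖p‖ :=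
    (norm_add_le _ _).trans (by linarith)
  have hratio : θ * ω * ‖p‖ ^ 2 / ((ϑ + (1 - θ) * ω) * ‖p‖)
      = θ * ω * ‖p‖ / (ϑ + (1 - θ) * ω) := by
    rcases eq_or_ne ‖p‖ 0 with hp | hp
    · simp [hp]
    · rw [sq, ← mul_assoc, mul_div_mul_right _ _ hp]
  rw [hσ, ← hratio]
  exact min_le_inner_min_one_inv_norm_smul hinner hnorm

/-- A key estimate in the source-seeking analysis: for a strongly convex objective
with Lipschitz gradient and the unit saturation `σ`, the saturated perturbed
gradient field satisfies
`pᵀσ(∇h(p)+Δ) ≥ min{θω|p|², θω|p|/(ϑ+(1−θ)ω)}` whenever `|Δ| ≤ (1−θ)ω|p|`. -/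
theorem stmt_15
    {n : ℕ}
    (h : EuclideanSpace ℝ (Fin n) → ℝ) (hh : ContDiff ℝ 1 h)
    (hgrad0 : gradient h 0 = 0)
    (ω ϑ : ℝ) (hω : 0 < ω) (hϑ : 0 < ϑ)
    (hconv : ∀ p₁ p₂ : EuclideanSpace ℝ (Fin n),
      ω * ‖p₁ - p₂‖ ^ 2 ≤ ⟪p₁ - p₂, gradient h p₁ - gradient h p₂⟫_ℝ)
    (hlip : ∀ p₁ p₂ : EuclideanSpace ℝ (Fin n),
      ‖gradient h p₁ - gradient h p₂‖ ≤ ϑ * ‖p₁ - p₂‖)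
    (σ : EuclideanSpace ℝ (Fin n) → EuclideanSpace ℝ (Fin n))
    (hσ : ∀ v, σ v = min 1 ‖v‖⁻¹ • v)
    (θ : ℝ) (hθ : 0 < θ) (hθ' : θ < 1) :
    ∀ (p Δ : EuclideanSpace ℝ (Fin n)), ‖Δ‖ ≤ (1 - θ) * ω * ‖p‖ →
      min (θ * ω * ‖p‖ ^ 2) (θ * ω * ‖p‖ / (ϑ + (1 - θ) * ω))
        ≤ ⟪p, σ (gradient h p + Δ)⟫_ℝ :=
  stmt_15_general h hgrad0 ω ϑ hconv hlip σ hσ θ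
end
end

section
/- Let h : ℝⁿ → ℝ be continuously differentiable with |∇h(ξ₁)−∇h(ξ₂)| ≤ ϑ|ξ₁−ξ₂| for all ξ₁, ξ₂ ∈ ℝⁿ, and let d₁, …, d_N ∈ ℝⁿ satisfy Σ_{i=1}^N d_i = 0. Then for every p ∈ ℝⁿ, | Σ_{i=1}^N d_i·h(p+d_i) − (Σ_{i=1}^N d_i d_iᵀ)·∇h(p) | ≤ ϑ·Σ_{i=1}^N |d_i|³. -/
/-! Since `Σ_i d_i = 0`, the error equals `Σ_i (h(p + d_i) - h(p) - ⟪∇h(p), d_i⟫) • d_i`.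
The mean value inequality, applied to `h` minus its linearization at `p` on the segment
`[p, p + d_i]`, bounds each coefficient by `ϑ |d_i|²`, since there the derivative differs from
`Dh(p)` by at most `ϑ |d_i|`. -/

open Set Filter MeasureTheory InnerProductSpace

noncomputable section

theorem norm_image_add_sub_sub_fderiv_le {E F : Type*} [NormedAddCommGroup E] [NormedSpace ℝ E]
    [NormedAddCommGroup F] [NormedSpace ℝ F] {f : E → F} (hf : Differentiable ℝ f)
    {C : ℝ} {x : E} (hC : ∀ y, ‖fderiv ℝ f y - fderiv ℝ f x‖ ≤ C * ‖y - x‖) (v : E) :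
    ‖f (x + v) - f x - fderiv ℝ f x v‖ ≤ C * ‖v‖ ^ 2 := by
  have hCv : 0 ≤ C * ‖v‖ := (norm_nonneg _).trans (by simpa using hC (x + v))
  have bound : ∀ z ∈ segment ℝ x (x + v), ‖fderiv ℝ f z - fderiv ℝ f x‖ ≤ C * ‖v‖ := by
    rw [segment_eq_image']
    rintro _ ⟨t, ⟨ht₀, ht₁⟩, rfl⟩
    calc ‖fderiv ℝ f (x + t • (x + v - x)) - fderiv ℝ f x‖
        ≤ C * ‖x + t • (x + v - x) - x‖ := hC _
      _ = t * (C * ‖v‖) := by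
        rw [add_sub_cancel_left, add_sub_cancel_left, norm_smul, Real.norm_of_nonneg ht₀]; ring
      _ ≤ C * ‖v‖ := mul_le_of_le_one_left hCv ht₁
  have mvt := (convex_segment x (x + v)).norm_image_sub_le_of_norm_fderiv_le' (fun z _ => hf z)
    bound (left_mem_segment ℝ x (x + v)) (right_mem_segment ℝ x (x + v))
  calc ‖f (x + v) - f x - fderiv ℝ f x v‖ ≤ C * ‖v‖ * ‖v‖ := by
        simpa only [add_sub_cancel_left] using mvt
    _ = C * ‖v‖ ^ 2 := by ring

theorem abs_image_add_sub_sub_inner_gradient_le {F : Type*} [NormedAddCommGroup F]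
    [InnerProductSpace ℝ F] [CompleteSpace F] {f : F → ℝ} (hf : Differentiable ℝ f)
    {C : ℝ} {x : F} (hC : ∀ y, ‖gradient f y - gradient f x‖ ≤ C * ‖y - x‖) (v : F) :
    |f (x + v) - f x - ⟪gradient f x, v⟫_ℝ| ≤ C * ‖v‖ ^ 2 := by
  have hfderiv : ∀ y, ‖fderiv ℝ f y - fderiv ℝ f x‖ ≤ C * ‖y - x‖ := fun y => by
    rw [← toDual_gradient, ← toDual_gradient, ← map_sub, LinearIsometryEquiv.norm_map]
    exact hC y
  simpa only [← toDual_gradient (f := f), toDual_apply_apply, Real.norm_eq_abs]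
    using norm_image_add_sub_sub_fderiv_le hf hfderiv v

theorem Finset.sum_smul_eq_sum_sub_smul_of_sum_eq_zero {ι R M : Type*} [Ring R]
    [AddCommGroup M] [Module R M] (s : Finset ι) {d : ι → M} (hd : ∑ i ∈ s, d i = 0)
    (a : ι → R) (c : R) : ∑ i ∈ s, a i • d i = ∑ i ∈ s, (a i - c) • d i := by
  simp only [sub_smul, Finset.sum_sub_distrib, ← Finset.smul_sum, hd, smul_zero, sub_zero]

/-- The matrix-vector product `(Σ_i d_i d_iᵀ)·∇h(p)` is written as `Σ_i ⟪d_i, ∇h(p)⟫ • d_i`. -/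
theorem stmt_16
    {n N : ℕ}
    (h : EuclideanSpace ℝ (Fin n) → ℝ) (hh : ContDiff ℝ 1 h)
    (ϑ : ℝ)
    (hlip : ∀ ξ₁ ξ₂ : EuclideanSpace ℝ (Fin n),
      ‖gradient h ξ₁ - gradient h ξ₂‖ ≤ ϑ * ‖ξ₁ - ξ₂‖)
    (d : Fin N → EuclideanSpace ℝ (Fin n)) (hd : ∑ i, d i = 0) :
    ∀ p : EuclideanSpace ℝ (Fin n),
      ‖(∑ i, h (p + d i) • d i) - ∑ i, ⟪d i, gradient h p⟫_ℝ • d i‖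
        ≤ ϑ * ∑ i, ‖d i‖ ^ 3 := by
  intro p
  have taylor : ∀ v, |h (p + v) - h p - ⟪gradient h p, v⟫_ℝ| ≤ ϑ * ‖v‖ ^ 2 :=
    abs_image_add_sub_sub_inner_gradient_le (hh.differentiable one_ne_zero) (fun y => hlip y p)
  have hsum : (∑ i, h (p + d i) • d i) - ∑ i, ⟪d i, gradient h p⟫_ℝ • d i
      = ∑ i, (h (p + d i) - h p - ⟪gradient h p, d i⟫_ℝ) • d i := by
    simp only [← Finset.sum_sub_distrib, ← sub_smul]
    rw [Finset.sum_smul_eq_sum_sub_smul_of_sum_eq_zero _ hd _ (h p)]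
    congr! 2 with i
    rw [real_inner_comm]
    ring
  calc ‖(∑ i, h (p + d i) • d i) - ∑ i, ⟪d i, gradient h p⟫_ℝ • d i‖
      ≤ ∑ i, |h (p + d i) - h p - ⟪gradient h p, d i⟫_ℝ| * ‖d i‖ := by
        rw [hsum]
        exact (norm_sum_le _ _).trans_eq (by simp only [norm_smul, Real.norm_eq_abs])
    _ ≤ ∑ i, ϑ * ‖d i‖ ^ 2 * ‖d i‖ := by
        gcongr with i
        exact taylor (d i)
    _ = ϑ * ∑ i, ‖d i‖ ^ 3 := by
        rw [Finset.mul_sum]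
        exact Finset.sum_congr rfl fun i _ => by ring
end
end
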